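/- Let Z = (C₁,…,C_p) be a partition of {1,…,N} with p ≥ 2 and let Z̃ = (C₁ ∪ C₂, C₃,…,C_p) be the partition obtained by merging the clusters C₁ and C₂. Then for all x, y ∈ X₀: ⟨P_c(Z)x, P_c(Z)y⟩_m − ⟨P_c(Z̃)x, P_c(Z̃)y⟩_m = (M[C₁]M[C₂]/(M[C₁]+M[C₂])) · ⟨x_c[C₁] − x_c[C₂], y_c[C₁] − y_c[C₂]⟩, where ⟨·,·⟩ is the standard inner product on ℝⁿ. -/
import Mathlib


/-! STATEMENT 13: merging two clusters of a partition changes the center-of-mass inner product by the reduced-mass term. -/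

open MeasureTheory Finset

open scoped RealInnerProductSpace

noncomputable section

/-- The one-particle space `ℝⁿ`. -/
abbrev Pt (n : ℕ) := EuclideanSpace ℝ (Fin n)

/-- The configuration space `X = (ℝⁿ)^N`. -/
abbrev Conf (N n : ℕ) := Fin N → Pt n

/-- The mass inner product `⟨x,y⟩_m = ∑ i mᵢ ⟨xᵢ, yᵢ⟩`. -/
def minner {N n : ℕ} (mass : Fin N → ℝ) (x y : Conf N n) : ℝ :=
  ∑ i, mass i * ⟪x i, y i⟫

/-- The mass norm `|x|_m`. -/
def mnorm {N n : ℕ} (mass : Fin N → ℝ) (x : Conf N n) : ℝ :=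
  Real.sqrt (minner mass x x)

/-- The space `X₀` of relative positions: `∑ i mᵢ xᵢ = 0`. -/
def X0 {N n : ℕ} (mass : Fin N → ℝ) : Set (Conf N n) :=
  {x | ∑ i, mass i • x i = 0}

/-- Total mass `M[C]` of a cluster `C`. -/
def cmass {N : ℕ} (mass : Fin N → ℝ) (C : Finset (Fin N)) : ℝ := ∑ i ∈ C, mass i

/-- Center of mass `x_c[C]` of the cluster `C`. -/
def com {N n : ℕ} (mass : Fin N → ℝ) (C : Finset (Fin N)) (x : Conf N n) : Pt n :=
  (cmass mass C)⁻¹ • ∑ i ∈ C, mass i • x i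

/-- The `⟨·,·⟩_m`-orthogonal projection `P₀[C]` of `X₀` onto `X₀[C]`:
explicitly, `(P₀[C]x)ᵢ = xᵢ − x_c[C]` for `i ∈ C` and `0` otherwise. -/
def P0C {N n : ℕ} (mass : Fin N → ℝ) (C : Finset (Fin N)) (x : Conf N n) : Conf N n :=
  fun i => if i ∈ C then x i - com mass C x else 0

/-- A partition (cluster decomposition) of the `N`-particle system. -/
abbrev Partn (N : ℕ) := Finpartition (Finset.univ : Finset (Fin N))

/-- The `⟨·,·⟩_m`-orthogonal projection `P_c(Z)` of `X₀` onto `X_c(Z) = X₀ ⊖ X₀(Z)`: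
explicitly, `(P_c(Z)x)ᵢ = x_c[C]` where `C` is the cluster of `Z` containing `i`. -/
def PcZ {N n : ℕ} (mass : Fin N → ℝ) (Z : Partn N) (x : Conf N n) : Conf N n :=
  fun i => ∑ C ∈ Z.parts, if i ∈ C then com mass C x else 0

/-- The `⟨·,·⟩_m`-orthogonal projection `P₀(Z)` of `X₀` onto `X₀(Z) = ⊕_{C ∈ Z} X₀[C]`. -/
def P0Z {N n : ℕ} (mass : Fin N → ℝ) (Z : Partn N) (x : Conf N n) : Conf N n :=
  x - PcZ mass Z x

/-- The cone `K(Z,κ) = {x ∈ X₀ : |P₀(Z)x|_m ≤ κ|P_c(Z)x|_m}` for `|Z| > 1`;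
for the trivial partition (`|Z| = 1`), `K(Z,κ) = {x ∈ X₀ : |x|_m ≤ κ}`. -/
def cone {N n : ℕ} (mass : Fin N → ℝ) (Z : Partn N) (κ : ℝ) : Set (Conf N n) :=
  if 1 < Z.parts.card then
    {x ∈ X0 mass | mnorm mass (P0Z mass Z x) ≤ κ * mnorm mass (PcZ mass Z x)}
  else
    {x ∈ X0 mass | mnorm mass x ≤ κ}

lemma minner_PcZ {N n : ℕ} (mass : Fin N → ℝ) (Z : Partn N) (x y : Conf N n) :
    minner mass (PcZ mass Z x) (PcZ mass Z y)
      = ∑ C ∈ Z.parts, cmass mass C * ⟪com mass C x, com mass C y⟫ := by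
  unfold minner PcZ
  have h : ∀ i : Fin N,
      (⟪∑ C ∈ Z.parts, ite (i ∈ C) (com mass C x) 0,
        ∑ D ∈ Z.parts, ite (i ∈ D) (com mass D y) 0⟫ : ℝ)
      = ∑ C ∈ Z.parts, ite (i ∈ C) (⟪com mass C x, com mass C y⟫ : ℝ) 0 := by
    intro i
    rw [sum_inner]
    refine Finset.sum_congr rfl fun C hC => ?_
    rw [inner_sum]
    by_cases hiC : i ∈ C
    · simp only [hiC, if_true]
      rw [Finset.sum_eq_single C (fun D hD hDC => by
          have : i ∉ D := fun hiD => hDC (Z.eq_of_mem_parts hD hC hiD hiC)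
          simp [this]) (fun h => absurd hC h)]
      simp [hiC]
    · simp [hiC]
  simp_rw [h, Finset.mul_sum, mul_ite, mul_zero]
  rw [Finset.sum_comm]
  refine Finset.sum_congr rfl fun C hC => ?_
  rw [Finset.sum_ite_mem, Finset.univ_inter, cmass, Finset.sum_mul]

theorem stmt_13 (N n : ℕ) (hN : 2 ≤ N) (hn : 1 ≤ n)
    (mass : Fin N → ℝ) (hm : ∀ i, 0 < mass i)
    (Z Ztil : Partn N)
    (C₁ C₂ : Finset (Fin N)) (hC₁ : C₁ ∈ Z.parts) (hC₂ : C₂ ∈ Z.parts) (hne : C₁ ≠ C₂)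
    (hmerge : Ztil.parts = insert (C₁ ∪ C₂) (Z.parts \ {C₁, C₂}))
    (x y : Conf N n) (hx : x ∈ X0 mass) (hy : y ∈ X0 mass) :
    minner mass (PcZ mass Z x) (PcZ mass Z y)
        - minner mass (PcZ mass Ztil x) (PcZ mass Ztil y)
      = (cmass mass C₁ * cmass mass C₂ / (cmass mass C₁ + cmass mass C₂)) *
          ⟪com mass C₁ x - com mass C₂ x, com mass C₁ y - com mass C₂ y⟫ := by
  set M₁ := cmass mass C₁ with hM₁
  set M₂ := cmass mass C₂ with hM₂
  have hne₁ : C₁.Nonempty := Z.nonempty_of_mem_parts hC₁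
  have hne₂ : C₂.Nonempty := Z.nonempty_of_mem_parts hC₂
  have hM₁pos : 0 < M₁ := Finset.sum_pos (fun i _ => hm i) hne₁
  have hM₂pos : 0 < M₂ := Finset.sum_pos (fun i _ => hm i) hne₂
  have disj : Disjoint C₁ C₂ := Z.disjoint hC₁ hC₂ hne
  have hUnotmem : C₁ ∪ C₂ ∉ Z.parts \ ({C₁, C₂} : Finset (Finset (Fin N))) := by
    intro hmem
    rw [Finset.mem_sdiff] at hmem
    have hne' : C₁ ∪ C₂ ≠ C₁ := fun h => hmem.2 (by simp [h])
    have hd : Disjoint C₁ (C₁ ∪ C₂) := Z.disjoint hC₁ hmem.1 (fun h => hne' h.symm)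
    have hd' : Disjoint C₁ C₁ := hd.mono_right Finset.subset_union_left
    exact hne₁.ne_empty (by simpa [disjoint_self] using hd')
  have hMU : cmass mass (C₁ ∪ C₂) = M₁ + M₂ := by
    rw [cmass, Finset.sum_union disj]; rfl
  have hMsum : 0 < M₁ + M₂ := by linarith
  have hcomU : ∀ z : Conf N n, com mass (C₁ ∪ C₂) z
      = (M₁ + M₂)⁻¹ • (M₁ • com mass C₁ z + M₂ • com mass C₂ z) := by
    intro z
    rw [com, hMU, Finset.sum_union disj]
    congr 1
    rw [com, com, smul_smul, smul_smul, mul_inv_cancel₀ hM₁pos.ne',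
      mul_inv_cancel₀ hM₂pos.ne', one_smul, one_smul]
  have hsub : ({C₁, C₂} : Finset (Finset (Fin N))) ⊆ Z.parts := by
    intro C hC
    rcases Finset.mem_insert.1 hC with h | h
    · exact h ▸ hC₁
    · exact (Finset.mem_singleton.1 h) ▸ hC₂
  rw [minner_PcZ, minner_PcZ, hmerge, Finset.sum_insert hUnotmem,
    ← Finset.sum_sdiff hsub, Finset.sum_pair hne, hMU, hcomU x, hcomU y]
  simp only [real_inner_smul_left, real_inner_smul_right, inner_add_left, inner_add_right,
    inner_sub_left, inner_sub_right]
  field_simp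
  ring
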